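/- arXiv:1210.7127 — 2 statements merged into one kernel-verified Lean document; each statement's English description precedes it below -/
import Mathlib

section
/- Let N ≥ 2, let H0 be a diagonal traceless Hermitian N×N matrix and H1 a traceless Hermitian N×N matrix. If the graph of H1 is disconnected — i.e. there exists a nonempty proper subset S ⊂ {1, …, N} such that (H1)_{jk} = 0 whenever j ∈ S and k ∉ S — then Lie{−iH0, −iH1} ≠ su(N). -/
/-!
With respect to the ordering "outside `S` before inside `S`", both generators are block upper
triangular: `H0` because it is diagonal, `H1` by the cut condition. Block-triangular matrices
form an associative subalgebra, hence a Lie subalgebra, so the whole Lie span is block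
triangular. But `su(N)` contains `E_jk - E_kj` for `j ∈ S`, `k ∉ S`, which is not.
-/

open Matrix

attribute [local instance] LieRing.ofAssociativeRing

noncomputable section

/-- `su(N)`: the traceless skew-Hermitian `N×N` complex matrices. -/
def suSet (N : ℕ) : Set (Matrix (Fin N) (Fin N) ℂ) :=
  {A | Aᴴ = -A ∧ A.trace = 0}

namespace Matrix

variable {m R : Type*}

theorem blockTriangular_mem_iff [Zero R] {M : Matrix m m R} {S : Set m} :
    M.BlockTriangular (· ∈ S) ↔ ∀ j ∈ S, ∀ k ∉ S, M j k = 0 := by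
  constructor
  · intro hM j hj k hk
    exact hM (lt_iff_le_not_ge.2 ⟨fun h => absurd h hk, fun h => hk (h hj)⟩)
  · intro hM j k hjk
    obtain ⟨hj, hk⟩ := Classical.not_imp.1 (lt_iff_le_not_ge.1 hjk).2
    exact hM j hj k hk

theorem BlockTriangular.smul {α K : Type*} [LT α] [Zero R] [SMulZeroClass K R]
    {M : Matrix m m R} {b : m → α} (c : K) (hM : M.BlockTriangular b) :
    (c • M).BlockTriangular b :=
  fun _ _ h => by rw [smul_apply, hM h, smul_zero]

theorem IsDiag.blockTriangular {α : Type*} [Preorder α] [Zero R] [DecidableEq m]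
    {M : Matrix m m R} (hM : M.IsDiag) (b : m → α) : M.BlockTriangular b :=
  hM.diagonal_diag ▸ blockTriangular_diagonal _

theorem blockTriangular_of_mem_lieSpan {A α : Type*} [CommRing R] [Ring A] [Algebra R A]
    [Fintype m] [DecidableEq m] [LinearOrder α] {b : m → α} {s : Set (Matrix m m A)}
    (hs : ∀ M ∈ s, M.BlockTriangular b) {M : Matrix m m A}
    (hM : M ∈ LieSubalgebra.lieSpan R (Matrix m m A) s) : M.BlockTriangular b :=
  (LieSubalgebra.lieSpan_le
    (K := lieSubalgebraOfSubalgebra R _ (blockTriangularSubalgebra R A b))).2 hs hM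

theorem not_blockTriangular_single_sub_single [DecidableEq m] [Ring R] [Nontrivial R]
    {S : Set m} {j k : m} (hj : j ∈ S) (hk : k ∉ S) :
    ¬ (single j k (1 : R) - single k j 1).BlockTriangular (· ∈ S) := by
  intro h
  simpa [single_apply_of_ne, (ne_of_mem_of_not_mem hj hk).symm] using
    blockTriangular_mem_iff.1 h j hj k hk

end Matrix

theorem single_sub_single_mem_suSet {N : ℕ} {j k : Fin N} (hjk : j ≠ k) :
    single j k (1 : ℂ) - single k j 1 ∈ suSet N := by
  refine ⟨?_, ?_⟩
  · simp [conjTranspose_sub]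
  · simp [trace_single_eq_of_ne _ _ _ hjk, trace_single_eq_of_ne _ _ _ hjk.symm]

theorem lieSpan_ne_su_of_disconnected_general {N : ℕ}
    (H0 H1 : Matrix (Fin N) (Fin N) ℂ)
    (hH0diag : H0.IsDiag)
    (S : Set (Fin N)) (hSne : S.Nonempty) (hSproper : S ≠ Set.univ)
    (hcut : ∀ j ∈ S, ∀ k ∉ S, H1 j k = 0) :
    (LieSubalgebra.lieSpan ℝ (Matrix (Fin N) (Fin N) ℂ)
        {(-Complex.I) • H0, (-Complex.I) • H1} : Set (Matrix (Fin N) (Fin N) ℂ))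
      ≠ suSet N := by
  obtain ⟨j, hj⟩ := hSne
  obtain ⟨k, hk⟩ := (Set.ne_univ_iff_exists_notMem S).1 hSproper
  have hgen : ∀ M ∈ ({(-Complex.I) • H0, (-Complex.I) • H1} :
      Set (Matrix (Fin N) (Fin N) ℂ)), M.BlockTriangular (· ∈ S) := by
    rintro M (rfl | rfl)
    · exact (hH0diag.blockTriangular _).smul _
    · exact (blockTriangular_mem_iff.2 hcut).smul _
  intro hspan
  have hE := single_sub_single_mem_suSet (ne_of_mem_of_not_mem hj hk)
  rw [← hspan] at hE
  exact not_blockTriangular_single_sub_single hj hk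
    (blockTriangular_of_mem_lieSpan hgen hE)

/-- If the coupling graph of `H1` is disconnected — i.e. there is a nonempty proper
subset `S` of indices with `(H1)_{jk} = 0` whenever `j ∈ S` and `k ∉ S` — then `−iH0`
and `−iH1` (with `H0` diagonal) do not generate `su(N)`. -/
theorem lieSpan_ne_su_of_disconnected {N : ℕ} (hN : 2 ≤ N)
    (H0 H1 : Matrix (Fin N) (Fin N) ℂ)
    (hH0diag : H0.IsDiag) (hH0 : H0.IsHermitian) (hH0trace : H0.trace = 0)
    (hH1 : H1.IsHermitian) (hH1trace : H1.trace = 0)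
    (S : Set (Fin N)) (hSne : S.Nonempty) (hSproper : S ≠ Set.univ)
    (hcut : ∀ j ∈ S, ∀ k ∉ S, H1 j k = 0) :
    (LieSubalgebra.lieSpan ℝ (Matrix (Fin N) (Fin N) ℂ)
        {(-Complex.I) • H0, (-Complex.I) • H1} : Set (Matrix (Fin N) (Fin N) ℂ))
      ≠ suSet N :=
  lieSpan_ne_su_of_disconnected_general H0 H1 hH0diag S hSne hSproper hcut
end
end

section
/- Let L_1, …, L_m ∈ M_N(ℂ) define a unital dissipator 𝓛_D (i.e. Σ_k L_k L_k† = Σ_k L_k† L_k), let H : [0, ∞) → M_N(ℂ) be continuous with H(t) Hermitian for every t (an arbitrarily controlled Hamiltonian), and let ρ : [0, ∞) → M_N(ℂ) be differentiable with ρ(t) Hermitian for every t and ρ'(t) = −i[H(t), ρ(t)] + 𝓛_D(ρ(t)). Then the purity t ↦ tr(ρ(t)²) is non-increasing on [0, ∞). -/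
/-!
Along the flow, `d/dt tr(ρ²) = 2 Re tr(ρ ρ')`. The Hamiltonian contributes `tr(ρ [H, ρ]) = 0` by
cyclicity of the trace, whatever `H` is. For Hermitian `ρ`, each noise operator `l` satisfies
`2 tr(ρ 𝓛_l(ρ)) = tr(ρ² (l l† - l† l)) - tr([l, ρ] [l, ρ]†)`, so after summing, unitality kills
the first term and leaves `2 tr(ρ 𝓛_D(ρ)) = -Σ_k ‖[L_k, ρ]‖²_HS ≤ 0`.
-/

open Matrix

attribute [local instance] Matrix.frobeniusNormedAddCommGroup Matrix.frobeniusNormedSpace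

noncomputable section

/-- The dissipator associated to noise operators `L 1, …, L m`:
`𝓛_D(ρ) = Σ_k (L_k ρ L_k† − ½(L_k† L_k ρ + ρ L_k† L_k))`. -/
def dissipator {N m : ℕ} (L : Fin m → Matrix (Fin N) (Fin N) ℂ)
    (ρ : Matrix (Fin N) (Fin N) ℂ) : Matrix (Fin N) (Fin N) ℂ :=
  ∑ k : Fin m,
    (L k * ρ * (L k)ᴴ - (1 / 2 : ℂ) • ((L k)ᴴ * L k * ρ + ρ * ((L k)ᴴ * L k)))

open scoped ComplexOrder

attribute [local instance] Matrix.frobeniusNormedRing Matrix.frobeniusNormedAlgebra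

namespace Matrix

variable {n R : Type*} [Fintype n]

theorem trace_mul_mul_mul_rotate [CommRing R] (a b c d : Matrix n n R) :
    trace (a * (b * (c * d))) = trace (d * (a * (b * c))) := by
  rw [← Matrix.mul_assoc, ← Matrix.mul_assoc, trace_mul_comm, Matrix.mul_assoc]

theorem trace_mul_commutator_self [CommRing R] (A B : Matrix n n R) :
    trace (A * (B * A - A * B)) = 0 := by
  rw [Matrix.mul_sub, trace_sub, ← Matrix.mul_assoc, trace_mul_comm, sub_self]

theorem two_mul_trace_mul_dissipator_summand {l ρ : Matrix n n ℂ} (hρ : ρ.IsHermitian) :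
    2 * trace (ρ * (l * ρ * lᴴ - (1 / 2 : ℂ) • (lᴴ * l * ρ + ρ * (lᴴ * l)))) =
      trace (ρ * (ρ * (l * lᴴ))) - trace (ρ * (ρ * (lᴴ * l))) -
        trace ((l * ρ - ρ * l) * (l * ρ - ρ * l)ᴴ) := by
  simp only [conjTranspose_sub, conjTranspose_mul, hρ.eq, Matrix.mul_sub, Matrix.sub_mul,
    Matrix.mul_add, Matrix.mul_smul, trace_sub, trace_add, trace_smul, Matrix.mul_assoc,
    smul_eq_mul]
  linear_combination (trace_mul_mul_mul_rotate ρ ρ lᴴ l).symm - trace_mul_mul_mul_rotate ρ lᴴ l ρ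
    - trace_mul_mul_mul_rotate l ρ lᴴ ρ + trace_mul_mul_mul_rotate ρ l lᴴ ρ

end Matrix

theorem two_mul_trace_mul_dissipator {N m : ℕ} (L : Fin m → Matrix (Fin N) (Fin N) ℂ)
    {ρ : Matrix (Fin N) (Fin N) ℂ} (hρ : ρ.IsHermitian) :
    2 * trace (ρ * dissipator L ρ) =
      trace (ρ * (ρ * ∑ k, L k * (L k)ᴴ)) - trace (ρ * (ρ * ∑ k, (L k)ᴴ * L k)) -
        ∑ k, trace ((L k * ρ - ρ * L k) * (L k * ρ - ρ * L k)ᴴ) := by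
  rw [dissipator, Matrix.mul_sum, trace_sum, Finset.mul_sum]
  simp only [two_mul_trace_mul_dissipator_summand hρ, Finset.sum_sub_distrib, Matrix.mul_sum, trace_sum]

theorem trace_mul_dissipator_nonpos {N m : ℕ} {L : Fin m → Matrix (Fin N) (Fin N) ℂ}
    (hunital : ∑ k, L k * (L k)ᴴ = ∑ k, (L k)ᴴ * L k)
    {ρ : Matrix (Fin N) (Fin N) ℂ} (hρ : ρ.IsHermitian) :
    trace (ρ * dissipator L ρ) ≤ 0 := by
  have h := two_mul_trace_mul_dissipator L hρ
  rw [hunital, sub_self, zero_sub] at h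
  have hsum : 0 ≤ ∑ k, trace ((L k * ρ - ρ * L k) * (L k * ρ - ρ * L k)ᴴ) :=
    Finset.sum_nonneg fun k _ => (posSemidef_self_mul_conjTranspose _).trace_nonneg
  calc trace (ρ * dissipator L ρ) = 2⁻¹ * (2 * trace (ρ * dissipator L ρ)) := by ring
    _ ≤ 0 := mul_nonpos_of_nonneg_of_nonpos (by positivity) (h ▸ neg_nonpos.2 hsum)

theorem HasDerivWithinAt.re_trace_mul_self {n : Type*} [Fintype n] [DecidableEq n]
    {ρ : ℝ → Matrix n n ℂ} {ρ' : Matrix n n ℂ} {s : Set ℝ} {t : ℝ}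
    (hρ : HasDerivWithinAt ρ ρ' s t) :
    HasDerivWithinAt (fun u => (trace (ρ u * ρ u)).re) (2 * (trace (ρ t * ρ')).re) s t := by
  let reTrace : Matrix n n ℂ →L[ℝ] ℝ :=
    Complex.reCLM.comp ((traceLinearMap n ℂ ℂ).restrictScalars ℝ).toContinuousLinearMap
  refine (reTrace.hasFDerivAt.comp_hasDerivWithinAt t (hρ.mul hρ)).congr_deriv ?_
  change (trace (ρ' * ρ t + ρ t * ρ')).re = _
  rw [trace_add, trace_mul_comm ρ', Complex.add_re, two_mul]

theorem purity_antitoneOn_general {N m : ℕ}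
    (L : Fin m → Matrix (Fin N) (Fin N) ℂ)
    (hunital : ∑ k : Fin m, L k * (L k)ᴴ = ∑ k : Fin m, (L k)ᴴ * L k)
    (H : ℝ → Matrix (Fin N) (Fin N) ℂ)
    (ρ : ℝ → Matrix (Fin N) (Fin N) ℂ)
    (hρherm : ∀ t ∈ Set.Ici (0 : ℝ), (ρ t).IsHermitian)
    (hderiv : ∀ t ∈ Set.Ici (0 : ℝ),
      HasDerivWithinAt ρ
        (-Complex.I • (H t * ρ t - ρ t * H t) + dissipator L (ρ t))
        (Set.Ici (0 : ℝ)) t) :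
    AntitoneOn (fun t => (Matrix.trace (ρ t * ρ t)).re) (Set.Ici (0 : ℝ)) := by
  have hpurity (t) (ht : t ∈ Set.Ici (0 : ℝ)) :
      HasDerivWithinAt (fun u => (trace (ρ u * ρ u)).re)
        (2 * (trace (ρ t * dissipator L (ρ t))).re) (Set.Ici 0) t := by
    simpa only [Matrix.mul_add, Matrix.mul_smul, trace_add, trace_smul,
      trace_mul_commutator_self, smul_zero, zero_add] using (hderiv t ht).re_trace_mul_self
  refine antitoneOn_of_hasDerivWithinAt_nonpos (convex_Ici 0)
    (f' := fun t => 2 * (trace (ρ t * dissipator L (ρ t))).re)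
    (fun t ht => (hpurity t ht).continuousWithinAt) (fun t ht => ?_) (fun t ht => ?_)
  · exact (hpurity t (interior_subset ht)).mono interior_subset
  · have h := trace_mul_dissipator_nonpos hunital (hρherm t (interior_subset ht))
    exact mul_nonpos_of_nonneg_of_nonpos zero_le_two (Complex.nonpos_iff.1 h).1

/-- Along any solution of the controlled master equation
`ρ' = −i[H(t), ρ] + 𝓛_D(ρ)` with a unital dissipator `𝓛_D` and arbitrary (continuous,
Hermitian-valued) control Hamiltonian `H(t)`, the purity `tr(ρ(t)²)` is non-increasing
on `[0, ∞)`. -/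
theorem purity_antitoneOn {N m : ℕ}
    (L : Fin m → Matrix (Fin N) (Fin N) ℂ)
    (hunital : ∑ k : Fin m, L k * (L k)ᴴ = ∑ k : Fin m, (L k)ᴴ * L k)
    (H : ℝ → Matrix (Fin N) (Fin N) ℂ)
    (hHcont : ContinuousOn H (Set.Ici (0 : ℝ)))
    (hHherm : ∀ t ∈ Set.Ici (0 : ℝ), (H t).IsHermitian)
    (ρ : ℝ → Matrix (Fin N) (Fin N) ℂ)
    (hρherm : ∀ t ∈ Set.Ici (0 : ℝ), (ρ t).IsHermitian)
    (hderiv : ∀ t ∈ Set.Ici (0 : ℝ),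
      HasDerivWithinAt ρ
        (-Complex.I • (H t * ρ t - ρ t * H t) + dissipator L (ρ t))
        (Set.Ici (0 : ℝ)) t) :
    AntitoneOn (fun t => (Matrix.trace (ρ t * ρ t)).re) (Set.Ici (0 : ℝ)) :=
  purity_antitoneOn_general L hunital H ρ hρherm hderiv
end
end
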